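/- arXiv:2108.10011 — 2 statements merged into one kernel-verified Lean document; each statement's English description precedes it below -/
import Mathlib

section
/- Fix integers ℓ ≥ 2 and p ≥ 2, and let n have (ℓ,p)-digits n+1 = Σ_{i=0}^r n_i·p^{(i)} with n_r ≠ 0. Let J = { 0 ≤ i ≤ r−1 : n_i ≠ 0 } and suppose S_1, S_2 ⊆ J satisfy n[S_1] = n[S_2] + 2. Then there exists t ≥ 0 with t ∈ J such that: n has a tail of length t (that is, n_0 = ℓ−1 and n_i = p−1 for all 0 < i < t), the digit n_t equals 1, S_2 ∖ S_1 = {t}, S_1 ∖ S_2 = {0, 1, …, t−1}, and n[S_2] + 1 = m^{t+1}(n)[S_1 ∩ S_2]; in particular n[S_2] + 1 ∈ supp(m^{t+1}(n)). -/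
/-- `p^{(i)}`: `p^{(0)} = 1` and `p^{(i)} = ℓ·p^{i−1}` for `i ≥ 1`. -/
def plpow (ℓ p i : ℕ) : ℕ := if i = 0 then 1 else ℓ * p ^ (i - 1)

/-- The `i`-th `(ℓ,p)`-digit of `N`, so that `N = ∑ i, pldig ℓ p N i * plpow ℓ p i`
with `0 ≤ N_0 < ℓ` and `0 ≤ N_i < p` for `i ≥ 1`. -/
def pldig (ℓ p N i : ℕ) : ℕ := if i = 0 then N % ℓ else (N / ℓ / p ^ (i - 1)) % p


lemma plpow_zero (ℓ p : ℕ) : plpow ℓ p 0 = 1 := rfl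
lemma plpow_succ (ℓ p i : ℕ) : plpow ℓ p (i + 1) = ℓ * p ^ i := by simp [plpow]
lemma pldig_zero (ℓ p N : ℕ) : pldig ℓ p N 0 = N % ℓ := rfl
lemma pldig_succ (ℓ p N i : ℕ) : pldig ℓ p N (i + 1) = (N / ℓ / p ^ i) % p := by
  simp [pldig]

lemma plpow_pos {ℓ p : ℕ} (hℓ : 0 < ℓ) (hp : 0 < p) (i : ℕ) : 0 < plpow ℓ p i := by
  cases i with
  | zero => simp [plpow]
  | succ i => rw [plpow_succ]; exact Nat.mul_pos hℓ (pow_pos hp i)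

lemma plpow_lt_succ {ℓ p : ℕ} (hℓ : 2 ≤ ℓ) (hp : 2 ≤ p) (i : ℕ) :
    plpow ℓ p i < plpow ℓ p (i + 1) := by
  cases i with
  | zero => simp [plpow]; omega
  | succ i =>
    rw [plpow_succ, plpow_succ]
    exact (Nat.mul_lt_mul_left (by omega : 0 < ℓ)).2 (Nat.pow_lt_pow_succ (by omega))

lemma pldig_le {ℓ p : ℕ} (hℓ : 0 < ℓ) (hp : 0 < p) (N i : ℕ) :
    pldig ℓ p N i ≤ (if i = 0 then ℓ else p) - 1 := by
  cases i with
  | zero => have := Nat.mod_lt N hℓ; simpa [pldig] using by omega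
  | succ i =>
    have := Nat.mod_lt (N / ℓ / p ^ i) hp
    simp only [pldig_succ, if_neg (Nat.succ_ne_zero i)]
    omega

lemma sum_basep_lt {p : ℕ} (hp : 0 < p) (e : ℕ → ℕ) (he : ∀ i, e i < p) (m : ℕ) :
    ∑ i ∈ Finset.range m, e i * p ^ i < p ^ m := by
  induction m with
  | zero => simp
  | succ m ih =>
    rw [Finset.sum_range_succ, pow_succ]
    have h1 := he m
    have h2 : 0 < p ^ m := pow_pos hp m
    have h3 : e m * p ^ m ≤ (p - 1) * p ^ m := Nat.mul_le_mul_right _ (by omega)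
    have h4 : (p - 1) * p ^ m = p * p ^ m - p ^ m := by rw [Nat.sub_one_mul]
    have h5 : p ^ m ≤ p * p ^ m := Nat.le_mul_of_pos_left _ hp
    have h6 : p ^ m * p = p * p ^ m := mul_comm _ _
    omega

lemma sum_basep_digit {p : ℕ} (hp : 0 < p) :
    ∀ (j m : ℕ) (e : ℕ → ℕ), (∀ i, e i < p) → j < m →
      (∑ i ∈ Finset.range m, e i * p ^ i) / p ^ j % p = e j := by
  intro j
  induction j with
  | zero =>
    intro m e he hj
    obtain ⟨m', rfl⟩ : ∃ m', m = m' + 1 := ⟨m - 1, by omega⟩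
    rw [Finset.sum_range_succ']
    have h : ∑ i ∈ Finset.range m', e (i + 1) * p ^ (i + 1)
        = p * ∑ i ∈ Finset.range m', e (i + 1) * p ^ i := by
      rw [Finset.mul_sum]; exact Finset.sum_congr rfl fun i _ => by ring
    rw [h, pow_zero, mul_one, Nat.div_one, Nat.mul_add_mod]
    exact Nat.mod_eq_of_lt (he 0)
  | succ j ih =>
    intro m e he hj
    obtain ⟨m', rfl⟩ : ∃ m', m = m' + 1 := ⟨m - 1, by omega⟩
    rw [Finset.sum_range_succ']
    have h : ∑ i ∈ Finset.range m', e (i + 1) * p ^ (i + 1)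
        = p * ∑ i ∈ Finset.range m', e (i + 1) * p ^ i := by
      rw [Finset.mul_sum]; exact Finset.sum_congr rfl fun i _ => by ring
    rw [h, pow_zero, mul_one, pow_succ', ← Nat.div_div_eq_div_mul,
      Nat.mul_add_div hp, Nat.div_eq_of_lt (he 0), add_zero]
    exact ih m' (fun i => e (i + 1)) (fun i => he (i + 1)) (by omega)

lemma pldig_sum {ℓ p : ℕ} (hℓ : 2 ≤ ℓ) (hp : 2 ≤ p) (m : ℕ) (d : ℕ → ℕ)
    (hd0 : d 0 < ℓ) (hds : ∀ i, d (i + 1) < p) (j : ℕ) :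
    pldig ℓ p (∑ i ∈ Finset.range m, d i * plpow ℓ p i) j =
      if j < m then d j else 0 := by
  have hppos : 0 < p := by omega
  cases m with
  | zero => simp [pldig, Nat.zero_div]
  | succ m' =>
    rw [Finset.sum_range_succ']
    have h : ∑ i ∈ Finset.range m', d (i + 1) * plpow ℓ p (i + 1)
        = ℓ * ∑ i ∈ Finset.range m', d (i + 1) * p ^ i := by
      rw [Finset.mul_sum]
      exact Finset.sum_congr rfl fun i _ => by rw [plpow_succ]; ring
    rw [h, plpow_zero, mul_one]
    set T := ∑ i ∈ Finset.range m', d (i + 1) * p ^ i with hT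
    cases j with
    | zero =>
      rw [pldig_zero, Nat.mul_add_mod, Nat.mod_eq_of_lt hd0, if_pos (Nat.succ_pos m')]
    | succ j' =>
      rw [pldig_succ, Nat.mul_add_div (by omega : 0 < ℓ), Nat.div_eq_of_lt hd0, add_zero]
      by_cases hjm : j' < m'
      · rw [sum_basep_digit hppos j' m' (fun i => d (i + 1)) (fun i => hds i) hjm]
        rw [if_pos (by omega)]
      · have hTlt : T < p ^ m' := sum_basep_lt hppos _ (fun i => hds i) m'
        have : T < p ^ j' := lt_of_lt_of_le hTlt (Nat.pow_le_pow_right hppos (by omega))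
        rw [Nat.div_eq_of_lt this, Nat.zero_mod, if_neg (by omega)]

lemma basep_trunc {p : ℕ} (M : ℕ) :
    ∀ k, M % p ^ k = ∑ j ∈ Finset.range k, (M / p ^ j % p) * p ^ j := by
  intro k
  induction k with
  | zero => simp [Nat.mod_one]
  | succ k ih =>
    rw [pow_succ, Nat.mod_mul, ih, Finset.sum_range_succ]
    ring

lemma pldig_trunc {ℓ p : ℕ} (N : ℕ) (k : ℕ) :
    N % plpow ℓ p k = ∑ i ∈ Finset.range k, pldig ℓ p N i * plpow ℓ p i := by
  cases k with
  | zero => simp [plpow, Nat.mod_one]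
  | succ k' =>
    rw [plpow_succ, Nat.mod_mul, basep_trunc (N / ℓ) k', Finset.sum_range_succ',
      pldig_zero, plpow_zero, mul_one, Finset.mul_sum, add_comm]
    congr 1
    exact Finset.sum_congr rfl fun j _ => by rw [pldig_succ, plpow_succ]; ring

lemma pldig_expand {ℓ p : ℕ} (hℓ : 2 ≤ ℓ) (hp : 2 ≤ p) (N r : ℕ)
    (htop : ∀ i, r < i → pldig ℓ p N i = 0) :
    N = ∑ i ∈ Finset.range (r + 1), pldig ℓ p N i * plpow ℓ p i := by
  have hdiv : N / plpow ℓ p (r + 1) = 0 := by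
    rw [plpow_succ, ← Nat.div_div_eq_div_mul]
    set Q := N / ℓ / p ^ r with hQ
    by_contra hQ0
    have hQne : Q ≠ 0 := hQ0
    set j := Nat.log p Q with hj
    have h1 : p ^ j ≤ Q := Nat.pow_log_le_self p hQne
    have h2 : Q < p ^ (j + 1) := Nat.lt_pow_succ_log_self (by omega) Q
    have hd := htop (r + 1 + j) (by omega)
    rw [show r + 1 + j = (r + j) + 1 by omega, pldig_succ] at hd
    have hre : N / ℓ / p ^ (r + j) = Q / p ^ j := by
      rw [hQ, pow_add, ← Nat.div_div_eq_div_mul]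
    rw [hre] at hd
    have h3 : 1 ≤ Q / p ^ j := (Nat.one_le_div_iff (pow_pos (by omega) j)).2 h1
    have h4 : Q / p ^ j < p := by
      rw [Nat.div_lt_iff_lt_mul (pow_pos (by omega : 0 < p) j)]
      calc Q < p ^ (j + 1) := h2
        _ = p ^ j * p := pow_succ p j
        _ = p * p ^ j := mul_comm _ _
    rw [Nat.mod_eq_of_lt (by omega : Q / p ^ j < p)] at hd
    omega
  conv_lhs => rw [← Nat.mod_add_div N (plpow ℓ p (r + 1)), hdiv, Nat.mul_zero, add_zero]
  exact pldig_trunc N (r + 1)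

lemma maxsum {ℓ p : ℕ} (hℓ : 2 ≤ ℓ) (hp : 2 ≤ p) (t : ℕ) :
    ∑ i ∈ Finset.range t, ((if i = 0 then ℓ else p) - 1) * plpow ℓ p i
      = plpow ℓ p t - 1 := by
  induction t with
  | zero => simp [plpow]
  | succ t ih =>
    rw [Finset.sum_range_succ, ih]
    cases t with
    | zero => simp [plpow]
    | succ s =>
      rw [plpow_succ, plpow_succ, if_neg (Nat.succ_ne_zero s)]
      have ha : 0 < ℓ * p ^ s := Nat.mul_pos (by omega) (pow_pos (by omega) s)
      have hb : ℓ * p ^ s ≤ ℓ * p ^ s * p := Nat.le_mul_of_pos_right _ (by omega)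
      have hc : (p - 1) * (ℓ * p ^ s) = ℓ * p ^ s * p - ℓ * p ^ s := by
        rw [Nat.sub_one_mul]; ring_nf
      have hd : ℓ * p ^ (s + 1) = ℓ * p ^ s * p := by rw [pow_succ]; ring
      omega

lemma pldig_high {ℓ p : ℕ} (N t j : ℕ) :
    pldig ℓ p N (t + 1 + j) = N / plpow ℓ p (t + 1) / p ^ j % p := by
  rw [show t + 1 + j = (t + j) + 1 by omega, pldig_succ, plpow_succ,
    ← Nat.div_div_eq_div_mul, pow_add, ← Nat.div_div_eq_div_mul]

/-- `n[S] = n − 2·∑_{i ∈ S} n_i·p^{(i)}`, where `n_i` are the `(ℓ,p)`-digits of `n+1`. -/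
def nSub (ℓ p n : ℕ) (S : Finset ℕ) : ℕ :=
  n - 2 * ∑ i ∈ S, pldig ℓ p (n + 1) i * plpow ℓ p i

/-- `n` has a tail of length `t`: all `(ℓ,p)`-digits of `n+1` at positions below
`t` are maximal, i.e. `n_0 = ℓ−1` and `n_i = p−1` for `0 < i < t`. -/
def hasTail (ℓ p n t : ℕ) : Prop :=
  ∀ i, i < t → pldig ℓ p (n + 1) i = (if i = 0 then ℓ else p) - 1

/-- The mother of `n`: `m(n)+1` is obtained from `n+1` by setting its least
significant nonzero `(ℓ,p)`-digit to zero. -/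
noncomputable def motherN (ℓ p n : ℕ) : ℕ :=
  n - pldig ℓ p (n + 1) (sInf { i | pldig ℓ p (n + 1) i ≠ 0 }) *
        plpow ℓ p (sInf { i | pldig ℓ p (n + 1) i ≠ 0 })

/-- If `n[S_1] = n[S_2] + 2` for subsets `S_1, S_2` of the nonzero digit positions
of `n+1` below the top digit `r`, then there is a tail length `t` with digit
`n_t = 1` such that `S_2∖S_1 = {t}`, `S_1∖S_2 = {0,…,t−1}`, and
`n[S_2] + 1 = m^{t+1}(n)[S_1 ∩ S_2] ∈ supp(m^{t+1}(n))`. -/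
theorem supp_elements_differ_by_two (ℓ p n r : ℕ) (hℓ : 2 ≤ ℓ) (hp : 2 ≤ p)
    (hr : pldig ℓ p (n + 1) r ≠ 0)
    (htop : ∀ i, r < i → pldig ℓ p (n + 1) i = 0)
    (S₁ S₂ : Finset ℕ)
    (hS₁ : S₁ ⊆ (Finset.range r).filter (fun i => pldig ℓ p (n + 1) i ≠ 0))
    (hS₂ : S₂ ⊆ (Finset.range r).filter (fun i => pldig ℓ p (n + 1) i ≠ 0))
    (hdiff : nSub ℓ p n S₁ = nSub ℓ p n S₂ + 2) :
    ∃ t : ℕ, t ∈ (Finset.range r).filter (fun i => pldig ℓ p (n + 1) i ≠ 0) ∧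
      hasTail ℓ p n t ∧
      pldig ℓ p (n + 1) t = 1 ∧
      S₂ \ S₁ = {t} ∧
      S₁ \ S₂ = Finset.range t ∧
      nSub ℓ p n S₂ + 1 = nSub ℓ p ((motherN ℓ p)^[t + 1] n) (S₁ ∩ S₂) ∧
      nSub ℓ p n S₂ + 1 ∈
        (Finset.range r).powerset.image (fun S => nSub ℓ p ((motherN ℓ p)^[t + 1] n) S) := by
  classical
  have hlpos : 0 < ℓ := by omega
  have hppos : 0 < p := by omega
  have hrpos : r ≠ 0 := by
    rintro rfl
    have h1 : S₁ = ∅ := Finset.subset_empty.1 (by simpa using hS₁)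
    have h2 : S₂ = ∅ := Finset.subset_empty.1 (by simpa using hS₂)
    rw [h1, h2] at hdiff
    simp only [nSub, Finset.sum_empty, mul_zero, Nat.sub_zero] at hdiff
    omega
  obtain ⟨r', rfl⟩ : ∃ r', r = r' + 1 := ⟨r - 1, by omega⟩
  set J := (Finset.range (r' + 1)).filter (fun i => pldig ℓ p (n + 1) i ≠ 0) with hJdef
  set σ : Finset ℕ → ℕ := fun S => ∑ i ∈ S, pldig ℓ p (n + 1) i * plpow ℓ p i with hσdef
  have hnSub : ∀ S : Finset ℕ, nSub ℓ p n S = n - 2 * σ S := fun S => rfl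
  have hJr : J ⊆ Finset.range (r' + 1) := Finset.filter_subset _ _
  have hLr : (n + 1) % plpow ℓ p (r' + 1) = σ (Finset.range (r' + 1)) := pldig_trunc _ _
  have hq1 : 1 ≤ (n + 1) / plpow ℓ p (r' + 1) := by
    rw [plpow_succ, ← Nat.div_div_eq_div_mul]
    rw [pldig_succ] at hr
    rcases Nat.eq_zero_or_pos ((n + 1) / ℓ / p ^ r') with h0 | h0
    · rw [h0] at hr; simp at hr
    · exact h0
  have hmodlt : (n + 1) % plpow ℓ p (r' + 1) < plpow ℓ p (r' + 1) :=
    Nat.mod_lt _ (plpow_pos hlpos hppos _)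
  have hmoddiv : (n + 1) % plpow ℓ p (r' + 1) + plpow ℓ p (r' + 1) ≤ n + 1 := by
    have h := Nat.mod_add_div (n + 1) (plpow ℓ p (r' + 1))
    have h2 : plpow ℓ p (r' + 1) * 1 ≤ plpow ℓ p (r' + 1) * ((n + 1) / plpow ℓ p (r' + 1)) :=
      Nat.mul_le_mul_left _ hq1
    omega
  have hσle : ∀ S : Finset ℕ, S ⊆ J → σ S ≤ (n + 1) % plpow ℓ p (r' + 1) := by
    intro S hS
    rw [hLr]
    exact Finset.sum_le_sum_of_subset (hS.trans hJr)
  have h2σ : ∀ S : Finset ℕ, S ⊆ J → 2 * σ S ≤ n := by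
    intro S hS
    have := hσle S hS
    omega
  have hσ21 : σ S₂ = σ S₁ + 1 := by
    rw [hnSub S₁, hnSub S₂] at hdiff
    have h1 := h2σ S₁ hS₁
    have h2 := h2σ S₂ hS₂
    omega
  set A := S₁ \ S₂ with hAdef
  set B := S₂ \ S₁ with hBdef
  set C := S₁ ∩ S₂ with hCdef
  have hsplit1 : σ C + σ A = σ S₁ :=
    Finset.sum_inter_add_sum_sdiff S₁ S₂ (fun i => pldig ℓ p (n + 1) i * plpow ℓ p i)
  have hsplit2 : σ C + σ B = σ S₂ := by
    have h := Finset.sum_inter_add_sum_sdiff S₂ S₁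
      (fun i => pldig ℓ p (n + 1) i * plpow ℓ p i)
    rw [Finset.inter_comm] at h
    exact h
  have hBA : σ B = σ A + 1 := by omega
  have hA : A ⊆ J := Finset.sdiff_subset.trans hS₁
  have hB : B ⊆ J := Finset.sdiff_subset.trans hS₂
  have hsub : ∀ S : Finset ℕ, S ⊆ J → ∀ j,
      pldig ℓ p (σ S) j = if j ∈ S then pldig ℓ p (n + 1) j else 0 := by
    intro S hS j
    have hSr : S ⊆ Finset.range (r' + 1) := hS.trans hJr
    have hrw : σ S = ∑ i ∈ Finset.range (r' + 1),
        (if i ∈ S then pldig ℓ p (n + 1) i else 0) * plpow ℓ p i := by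
      rw [hσdef]
      simp only [ite_mul, zero_mul]
      rw [Finset.sum_ite_mem, Finset.inter_eq_right.2 hSr]
    have hb0 : (if 0 ∈ S then pldig ℓ p (n + 1) 0 else 0) < ℓ := by
      by_cases h0 : 0 ∈ S
      · rw [if_pos h0, pldig_zero]; exact Nat.mod_lt _ hlpos
      · rw [if_neg h0]; omega
    have hbs : ∀ i, (if i + 1 ∈ S then pldig ℓ p (n + 1) (i + 1) else 0) < p := by
      intro i
      by_cases hi : i + 1 ∈ S
      · rw [if_pos hi, pldig_succ]; exact Nat.mod_lt _ hppos
      · rw [if_neg hi]; omega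
    rw [hrw]
    refine (pldig_sum hℓ hp (r' + 1)
      (fun i => if i ∈ S then pldig ℓ p (n + 1) i else 0) hb0 hbs j).trans ?_
    by_cases hjS : j ∈ S
    · simp [hjS, Finset.mem_range.1 (hSr hjS)]
    · simp [hjS]
  have hBne : B.Nonempty := by
    by_contra h
    rw [Finset.not_nonempty_iff_eq_empty] at h
    rw [h, hσdef] at hBA
    simp at hBA
  obtain ⟨t, htB, htmin⟩ : ∃ t, t ∈ B ∧ ∀ b ∈ B, t ≤ b :=
    ⟨B.min' hBne, B.min'_mem hBne, fun b hb => B.min'_le b hb⟩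
  have htS₂ : t ∈ S₂ := (Finset.mem_sdiff.1 htB).1
  have htnS₁ : t ∉ S₁ := (Finset.mem_sdiff.1 htB).2
  have htJ : t ∈ J := hS₂ htS₂
  have htJ' := htJ
  rw [hJdef, Finset.mem_filter] at htJ'
  have htr : t < r' + 1 := Finset.mem_range.1 htJ'.1
  have hdt0 : pldig ℓ p (n + 1) t ≠ 0 := htJ'.2
  have hylow : ∀ i, i < t → pldig ℓ p (σ B) i = 0 := by
    intro i hi
    rw [hsub B hB i, if_neg (fun hiB => absurd (htmin i hiB) (by omega))]
  have hymod : σ B % plpow ℓ p t = 0 := by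
    rw [pldig_trunc]
    exact Finset.sum_eq_zero fun i hi => by
      rw [hylow i (Finset.mem_range.1 hi), zero_mul]
  have hyge : plpow ℓ p t ≤ σ B := by
    have h1 : pldig ℓ p (n + 1) t * plpow ℓ p t ≤ σ B :=
      Finset.single_le_sum (f := fun i => pldig ℓ p (n + 1) i * plpow ℓ p i)
        (fun i _ => Nat.zero_le _) htB
    have h2 : 1 ≤ pldig ℓ p (n + 1) t := Nat.one_le_iff_ne_zero.2 hdt0
    calc plpow ℓ p t = 1 * plpow ℓ p t := (one_mul _).symm
      _ ≤ pldig ℓ p (n + 1) t * plpow ℓ p t := Nat.mul_le_mul_right _ h2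
      _ ≤ σ B := h1
  have hPpos : 0 < plpow ℓ p t := plpow_pos hlpos hppos t
  obtain ⟨k, hk⟩ : ∃ k, σ B = plpow ℓ p t * (k + 1) := by
    have h := Nat.mod_add_div (σ B) (plpow ℓ p t)
    rw [hymod, zero_add] at h
    have hd1 : 1 ≤ σ B / plpow ℓ p t := by
      rcases Nat.eq_zero_or_pos (σ B / plpow ℓ p t) with h0 | h0
      · rw [h0, Nat.mul_zero] at h; omega
      · exact h0
    refine ⟨σ B / plpow ℓ p t - 1, ?_⟩
    rw [show σ B / plpow ℓ p t - 1 + 1 = σ B / plpow ℓ p t by omega]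
    exact h.symm
  have hxA : σ A = plpow ℓ p t * k + (plpow ℓ p t - 1) := by
    have h : plpow ℓ p t * (k + 1) = plpow ℓ p t * k + plpow ℓ p t := by ring
    omega
  have hxmod : σ A % plpow ℓ p t = plpow ℓ p t - 1 := by
    rw [hxA, Nat.mul_add_mod]
    exact Nat.mod_eq_of_lt (by omega)
  have hsum_max : ∑ i ∈ Finset.range t, pldig ℓ p (σ A) i * plpow ℓ p i
      = plpow ℓ p t - 1 := by rw [← pldig_trunc, hxmod]
  have hxlowmax : ∀ i, i < t → pldig ℓ p (σ A) i = (if i = 0 then ℓ else p) - 1 := by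
    intro i hi
    by_contra hne
    have hlt : pldig ℓ p (σ A) i < (if i = 0 then ℓ else p) - 1 :=
      lt_of_le_of_ne (pldig_le hlpos hppos _ i) hne
    have hstrict : ∑ i ∈ Finset.range t, pldig ℓ p (σ A) i * plpow ℓ p i
        < ∑ i ∈ Finset.range t, ((if i = 0 then ℓ else p) - 1) * plpow ℓ p i := by
      apply Finset.sum_lt_sum
      · exact fun j _ => Nat.mul_le_mul_right _ (pldig_le hlpos hppos _ j)
      · exact ⟨i, Finset.mem_range.2 hi,
          (Nat.mul_lt_mul_right (plpow_pos hlpos hppos i)).2 hlt⟩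
    rw [hsum_max, maxsum hℓ hp] at hstrict
    omega
  have hmaxpos : ∀ i : ℕ, ((if i = 0 then ℓ else p) - 1) ≠ 0 := by
    intro i; split <;> omega
  have hAr : ∀ i, i < t → i ∈ A := by
    intro i hi
    have h := hxlowmax i hi
    rw [hsub A hA i] at h
    by_contra hiA
    rw [if_neg hiA] at h
    exact hmaxpos i h.symm
  have htail : ∀ i, i < t → pldig ℓ p (n + 1) i = (if i = 0 then ℓ else p) - 1 := by
    intro i hi
    have h := hxlowmax i hi
    rw [hsub A hA i, if_pos (hAr i hi)] at h
    exact h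
  have htA : t ∉ A := fun h => htnS₁ (Finset.mem_sdiff.1 h).1
  have hxt : pldig ℓ p (σ A) t = 0 := by rw [hsub A hA t, if_neg htA]
  have hxmod1 : σ A % plpow ℓ p (t + 1) = plpow ℓ p t - 1 := by
    rw [pldig_trunc, Finset.sum_range_succ, hxt, zero_mul, add_zero, hsum_max]
  have hPlt : plpow ℓ p t < plpow ℓ p (t + 1) := plpow_lt_succ hℓ hp t
  set q := σ A / plpow ℓ p (t + 1) with hqdef
  have hxdec : σ A = plpow ℓ p (t + 1) * q + (plpow ℓ p t - 1) := by
    have h := Nat.mod_add_div (σ A) (plpow ℓ p (t + 1))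
    rw [hxmod1, ← hqdef] at h
    omega
  have hydec : σ B = plpow ℓ p (t + 1) * q + plpow ℓ p t := by omega
  have hymod1 : σ B % plpow ℓ p (t + 1) = plpow ℓ p t := by
    rw [hydec, Nat.mul_add_mod]
    exact Nat.mod_eq_of_lt hPlt
  have hydiv : σ B / plpow ℓ p (t + 1) = q := by
    rw [hydec, Nat.mul_add_div (plpow_pos hlpos hppos _), Nat.div_eq_of_lt hPlt, add_zero]
  have hdt1 : pldig ℓ p (n + 1) t = 1 := by
    have h1 : ∑ i ∈ Finset.range (t + 1), pldig ℓ p (σ B) i * plpow ℓ p i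
        = plpow ℓ p t := by rw [← pldig_trunc, hymod1]
    rw [Finset.sum_range_succ] at h1
    have h2 : ∑ i ∈ Finset.range t, pldig ℓ p (σ B) i * plpow ℓ p i = 0 :=
      Finset.sum_eq_zero fun i hi => by rw [hylow i (Finset.mem_range.1 hi), zero_mul]
    rw [h2, zero_add, hsub B hB t, if_pos htB] at h1
    exact Nat.eq_of_mul_eq_mul_right hPpos (by rw [one_mul]; exact h1)
  have hhigh : ∀ i, t < i → pldig ℓ p (σ A) i = pldig ℓ p (σ B) i := by
    intro i hti
    obtain ⟨j, rfl⟩ : ∃ j, i = t + 1 + j := ⟨i - (t + 1), by omega⟩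
    rw [pldig_high, pldig_high, hydiv, ← hqdef]
  have hnotA : ∀ i, t < i → i ∉ A := by
    intro i hti hiA
    have h := hhigh i hti
    rw [hsub A hA i, if_pos hiA, hsub B hB i] at h
    have hiJ := hA hiA
    rw [hJdef, Finset.mem_filter] at hiJ
    by_cases hiB : i ∈ B
    · exact (Finset.mem_sdiff.1 hiB).2 (Finset.mem_sdiff.1 hiA).1
    · rw [if_neg hiB] at h
      exact hiJ.2 h
  have hnotB : ∀ i, t < i → i ∉ B := by
    intro i hti hiB
    have h := hhigh i hti
    rw [hsub A hA i, hsub B hB i, if_pos hiB] at h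
    have hiJ := hB hiB
    rw [hJdef, Finset.mem_filter] at hiJ
    by_cases hiA : i ∈ A
    · exact hnotA i hti hiA
    · rw [if_neg hiA] at h
      exact hiJ.2 h.symm
  have hBeq : B = {t} := by
    apply Finset.ext
    intro b
    simp only [Finset.mem_singleton]
    constructor
    · intro hb
      have h1 := htmin b hb
      have h2 : ¬ t < b := fun h => hnotB b h hb
      omega
    · rintro rfl; exact htB
  have hAeq : A = Finset.range t := by
    apply Finset.ext
    intro a
    simp only [Finset.mem_range]
    constructor
    · intro ha
      have h2 : ¬ t < a := fun h => hnotA a h ha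
      have h3 : a ≠ t := fun h => htA (h ▸ ha)
      omega
    · exact hAr a
  have hyval : σ B = plpow ℓ p t := by
    rw [hBeq, hσdef]
    simp only [Finset.sum_singleton]
    rw [hdt1, one_mul]
  have hCgt : ∀ i ∈ C, t < i := by
    intro i hi
    rw [hCdef, Finset.mem_inter] at hi
    by_contra hle
    rcases Nat.lt_or_ge i t with h | h
    · exact (Finset.mem_sdiff.1 (hAr i h)).2 hi.2
    · have hit : i = t := by omega
      exact htnS₁ (hit ▸ hi.1)
  -- mother iterates
  have hfull : n + 1 = ∑ i ∈ Finset.range (r' + 2), pldig ℓ p (n + 1) i * plpow ℓ p i :=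
    pldig_expand hℓ hp (n + 1) (r' + 1) htop
  have hSkle : ∀ m, m ≤ r' + 1 →
      ∑ i ∈ Finset.range m, pldig ℓ p (n + 1) i * plpow ℓ p i ≤ n := by
    intro m hm
    have h1 : ∑ i ∈ Finset.range m, pldig ℓ p (n + 1) i * plpow ℓ p i
        ≤ ∑ i ∈ Finset.range (r' + 1), pldig ℓ p (n + 1) i * plpow ℓ p i :=
      Finset.sum_le_sum_of_subset (Finset.range_subset_range.2 hm)
    have h2 : ∑ i ∈ Finset.range (r' + 1), pldig ℓ p (n + 1) i * plpow ℓ p i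
        = (n + 1) % plpow ℓ p (r' + 1) := (pldig_trunc _ _).symm
    omega
  have hvk : ∀ m, m ≤ r' + 1 →
      (n - ∑ i ∈ Finset.range m, pldig ℓ p (n + 1) i * plpow ℓ p i) + 1
        = ∑ i ∈ Finset.range (r' + 2),
            (if i < m then 0 else pldig ℓ p (n + 1) i) * plpow ℓ p i := by
    intro m hm
    have h2 : ∑ i ∈ Finset.range (r' + 2),
        (if i < m then pldig ℓ p (n + 1) i * plpow ℓ p i else 0)
        = ∑ i ∈ Finset.range m, pldig ℓ p (n + 1) i * plpow ℓ p i := by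
      rw [← Finset.sum_subset (Finset.range_subset_range.2 (show m ≤ r' + 2 by omega))
        (fun x _ hx => if_neg (fun hlt => hx (Finset.mem_range.2 hlt)))]
      exact Finset.sum_congr rfl fun i hi => if_pos (Finset.mem_range.1 hi)
    have h4 : ∑ i ∈ Finset.range (r' + 2),
        (if i < m then 0 else pldig ℓ p (n + 1) i) * plpow ℓ p i
        + ∑ i ∈ Finset.range m, pldig ℓ p (n + 1) i * plpow ℓ p i = n + 1 := by
      rw [← h2, ← Finset.sum_add_distrib]
      refine Eq.trans ?_ hfull.symm
      exact Finset.sum_congr rfl fun i _ => by by_cases hcase : i < m <;> simp [hcase]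
    have h5 := hSkle m hm
    omega
  have hdigv : ∀ m, m ≤ r' + 1 → ∀ j,
      pldig ℓ p ((n - ∑ i ∈ Finset.range m, pldig ℓ p (n + 1) i * plpow ℓ p i) + 1) j
        = if j < m then 0 else pldig ℓ p (n + 1) j := by
    intro m hm j
    rw [hvk m hm]
    have hb0 : (if 0 < m then 0 else pldig ℓ p (n + 1) 0) < ℓ := by
      split
      · omega
      · rw [pldig_zero]; exact Nat.mod_lt _ hlpos
    have hbs : ∀ i, (if i + 1 < m then 0 else pldig ℓ p (n + 1) (i + 1)) < p := by
      intro i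
      split
      · omega
      · rw [pldig_succ]; exact Nat.mod_lt _ hppos
    refine (pldig_sum hℓ hp (r' + 2)
      (fun i => if i < m then 0 else pldig ℓ p (n + 1) i) hb0 hbs j).trans ?_
    by_cases hjr : j < r' + 2
    · simp only [if_pos hjr]
    · simp only [if_neg hjr]
      rw [if_neg (show ¬ j < m by omega), htop j (by omega)]
  have hiter : ∀ m, m ≤ t + 1 → (motherN ℓ p)^[m] n
      = n - ∑ i ∈ Finset.range m, pldig ℓ p (n + 1) i * plpow ℓ p i := by
    intro m
    induction m with
    | zero => intro _; simp
    | succ m ih =>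
      intro hm
      have hmr : m ≤ r' + 1 := by omega
      rw [Function.iterate_succ_apply', ih (by omega)]
      have hdk : pldig ℓ p (n + 1) m ≠ 0 := by
        rcases Nat.lt_or_ge m t with h | h
        · rw [htail m h]; exact hmaxpos m
        · have hmt : m = t := by omega
          rw [hmt, hdt1]; omega
      set N' := n - ∑ i ∈ Finset.range m, pldig ℓ p (n + 1) i * plpow ℓ p i with hN'
      have hdig := hdigv m hmr
      have hmem : m ∈ {i | pldig ℓ p (N' + 1) i ≠ 0} := by
        simp only [Set.mem_setOf_eq, hdig m, if_neg (lt_irrefl m)]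
        rw [hN', hdig m, if_neg (lt_irrefl m)]; exact hdk
      have hinf : sInf {i | pldig ℓ p (N' + 1) i ≠ 0} = m := by
        apply le_antisymm (Nat.sInf_le hmem)
        apply le_csInf ⟨m, hmem⟩
        intro j hj
        by_contra hjm
        rw [Set.mem_setOf_eq, hdig j, if_pos (by omega)] at hj
        exact hj rfl
      unfold motherN
      rw [hinf, hdig m, if_neg (lt_irrefl m), Finset.sum_range_succ, ← Nat.sub_sub]
  have hmfin : (motherN ℓ p)^[t + 1] n
      = n - ∑ i ∈ Finset.range (t + 1), pldig ℓ p (n + 1) i * plpow ℓ p i :=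
    hiter (t + 1) le_rfl
  have hSkt : ∑ i ∈ Finset.range (t + 1), pldig ℓ p (n + 1) i * plpow ℓ p i
      = (plpow ℓ p t - 1) + plpow ℓ p t := by
    rw [Finset.sum_range_succ, hdt1, one_mul]
    congr 1
    rw [← maxsum hℓ hp t]
    exact Finset.sum_congr rfl fun i hi => by rw [htail i (Finset.mem_range.1 hi)]
  have htr1 : t + 1 ≤ r' + 1 := by omega
  have hσC : ∑ i ∈ C, pldig ℓ p ((n - ∑ i ∈ Finset.range (t + 1),
        pldig ℓ p (n + 1) i * plpow ℓ p i) + 1) i * plpow ℓ p i = σ C := by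
    rw [hσdef]
    exact Finset.sum_congr rfl fun i hi => by
      rw [hdigv (t + 1) htr1 i, if_neg (by have := hCgt i hi; omega)]
  have hkey : nSub ℓ p n S₂ + 1 = nSub ℓ p ((motherN ℓ p)^[t + 1] n) C := by
    have e2 : nSub ℓ p ((motherN ℓ p)^[t + 1] n) C
        = (n - ((plpow ℓ p t - 1) + plpow ℓ p t)) - 2 * σ C := by
      rw [hmfin]
      simp only [nSub]
      rw [hσC, hSkt]
    rw [hnSub S₂, e2]
    have h1 := h2σ S₂ hS₂
    have h2 : σ C + σ B = σ S₂ := hsplit2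
    have h3 : σ B = plpow ℓ p t := hyval
    have h4 : 0 < plpow ℓ p t := hPpos
    obtain ⟨sC, hsC⟩ : ∃ x, σ C = x := ⟨_, rfl⟩
    obtain ⟨sS, hsS⟩ : ∃ x, σ S₂ = x := ⟨_, rfl⟩
    obtain ⟨sB, hsB⟩ : ∃ x, σ B = x := ⟨_, rfl⟩
    obtain ⟨P, hP⟩ : ∃ x, plpow ℓ p t = x := ⟨_, rfl⟩
    rw [hsC, hsS, hP]
    rw [hsC, hsB, hsS] at h2
    rw [hsB, hP] at h3
    rw [hsS] at h1
    rw [hP] at h4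
    omega
  have hCsub : C ⊆ Finset.range (r' + 1) := by
    rw [hCdef]
    exact Finset.inter_subset_left.trans (hS₁.trans hJr)
  refine ⟨t, htJ, htail, hdt1, hBeq, hAeq, hkey, ?_⟩
  rw [hkey]
  exact Finset.mem_image.2 ⟨C, Finset.mem_powerset.2 hCsub, rfl⟩
end

section
/- Let μ be a composition of n. Then the set { m : C^μ_m > 0 } equals { m : s_μ ≤ m ≤ n and m ≡ n (mod 2) }, where s_μ = min{ m : C^μ_m > 0 }. In particular C^μ_n > 0; every m with C^μ_m > 0 satisfies m ≡ n (mod 2); and if C^μ_m > 0 and m + 2 ≤ n then C^μ_{m+2} > 0. -/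
/-- `t` is a walk over the composition `μ` with `m` defects: `0 ≤ t i ≤ μ i`,
every partial sum `∑_{i<j} (μ i − 2 t i)` is at least `t j`, and the total
`∑ i (μ i − 2 t i)` equals `m`. -/
def IsWalk {r : ℕ} (μ : Fin r → ℕ) (m : ℕ) (t : Fin r → ℕ) : Prop :=
  (∀ i, t i ≤ μ i) ∧
  (∀ j : Fin r, (t j : ℤ) ≤
      ∑ i ∈ Finset.univ.filter (fun i : Fin r => i < j), ((μ i : ℤ) - 2 * (t i : ℤ))) ∧
  (∑ i : Fin r, ((μ i : ℤ) - 2 * (t i : ℤ))) = (m : ℤ)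

/-- `C^μ_m`: the number of walks over `μ` with `m` defects. -/
noncomputable def walkCount {r : ℕ} (μ : Fin r → ℕ) (m : ℕ) : ℕ :=
  Nat.card { t : Fin r → ℕ // IsWalk μ m t }

/-- `s_μ`: the minimal number of defects of a walk over `μ`. -/
noncomputable def minDefects {r : ℕ} (μ : Fin r → ℕ) : ℕ :=
  sInf { m : ℕ | 0 < walkCount μ m }

/-!
Every walk has `∑ μ - m = 2 ∑ t`, which gives `m ≤ n` and `m ≡ n (mod 2)`, and the zero walk has
`n` defects. Lowering one positive `t j` by one raises every later partial sum by two, so it keeps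
the walk condition and adds two defects; such a `j` exists as long as `m < n`. Starting from a
walk with `s_μ` defects this reaches every admissible `m`.
-/

namespace IsWalk

variable {r : ℕ} {μ : Fin r → ℕ} {m : ℕ} {t : Fin r → ℕ}

theorem sum_sub_two_mul_sum (ht : IsWalk μ m t) :
    ((∑ i, μ i : ℕ) : ℤ) - 2 * ∑ i, (t i : ℤ) = m := by
  rw [← ht.2.2, Finset.sum_sub_distrib, Finset.mul_sum]
  push_cast
  rfl

theorem le_sum (ht : IsWalk μ m t) : m ≤ ∑ i, μ i := by
  have := ht.sum_sub_two_mul_sum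
  have : (0 : ℤ) ≤ ∑ i, (t i : ℤ) := Finset.sum_nonneg fun i _ => by positivity
  omega

theorem mod_two_eq (ht : IsWalk μ m t) : m % 2 = (∑ i, μ i) % 2 := by
  have := ht.sum_sub_two_mul_sum
  omega

theorem exists_pos_of_lt_sum (ht : IsWalk μ m t) (hm : m < ∑ i, μ i) : ∃ j, 0 < t j := by
  by_contra! h
  have hsum := ht.sum_sub_two_mul_sum
  simp only [fun i => Nat.le_zero.mp (h i), Nat.cast_zero, Finset.sum_const_zero, mul_zero,
    sub_zero, Nat.cast_inj] at hsum
  omega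

theorem sum_update_pred {j : Fin r} (hj : 0 < t j) (s : Finset (Fin r)) :
    ∑ i ∈ s, ((μ i : ℤ) - 2 * (Function.update t j (t j - 1) i : ℤ)) =
      ∑ i ∈ s, ((μ i : ℤ) - 2 * (t i : ℤ)) + if j ∈ s then 2 else 0 := by
  rw [← Finset.sum_ite_eq' s j (fun _ => (2 : ℤ)), ← Finset.sum_add_distrib]
  refine Finset.sum_congr rfl fun i _ => ?_
  rcases eq_or_ne i j with rfl | hij
  · simp only [Function.update_self, if_true]
    omega
  · simp [hij]

theorem update_pred (ht : IsWalk μ m t) {j : Fin r} (hj : 0 < t j) :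
    IsWalk μ (m + 2) (Function.update t j (t j - 1)) := by
  refine ⟨fun i => ?_, fun k => ?_, ?_⟩
  · rcases eq_or_ne i j with rfl | hij
    · simpa using (Nat.sub_le _ _).trans (ht.1 i)
    · simpa [Function.update_of_ne hij] using ht.1 i
  · have hk := ht.2.1 k
    rw [sum_update_pred hj]
    rcases eq_or_ne k j with rfl | hkj
    · simp only [Function.update_self, Finset.mem_filter, lt_irrefl, and_false, if_false]
      omega
    · rw [Function.update_of_ne hkj]
      split_ifs <;> omega
  · rw [sum_update_pred hj, ht.2.2]
    simp

end IsWalk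

section

variable {r : ℕ} (μ : Fin r → ℕ)

instance finite_walks (m : ℕ) : Finite { t : Fin r → ℕ // IsWalk μ m t } :=
  Set.Finite.to_subtype <| (Set.Finite.pi fun i => Set.finite_Iic (μ i)).subset
    fun _ ht i _ => ht.1 i

theorem walkCount_pos_iff {m : ℕ} : 0 < walkCount μ m ↔ ∃ t, IsWalk μ m t := by
  rw [walkCount, Nat.card_pos_iff]
  simp only [nonempty_subtype, and_iff_left_of_imp fun _ => finite_walks μ m]

theorem isWalk_zero : IsWalk μ (∑ i, μ i) 0 :=
  ⟨fun i => Nat.zero_le _, fun _ => by simpa using Finset.sum_nonneg fun i _ => by positivity,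
    by simp⟩

theorem walkCount_sum_pos : 0 < walkCount μ (∑ i, μ i) :=
  (walkCount_pos_iff μ).2 ⟨0, isWalk_zero μ⟩

theorem walkCount_add_two_pos {m : ℕ} (hm : 0 < walkCount μ m) (hm2 : m + 2 ≤ ∑ i, μ i) :
    0 < walkCount μ (m + 2) := by
  obtain ⟨t, ht⟩ := (walkCount_pos_iff μ).1 hm
  obtain ⟨j, hj⟩ := ht.exists_pos_of_lt_sum (by omega)
  exact (walkCount_pos_iff μ).2 ⟨_, ht.update_pred hj⟩

theorem walkCount_minDefects_pos : 0 < walkCount μ (minDefects μ) :=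
  Nat.sInf_mem (s := { m | 0 < walkCount μ m }) ⟨_, walkCount_sum_pos μ⟩

theorem walkCount_add_two_mul_pos {m : ℕ} (hm : 0 < walkCount μ m) :
    ∀ k, m + 2 * k ≤ ∑ i, μ i → 0 < walkCount μ (m + 2 * k)
  | 0, _ => hm
  | k + 1, hk => walkCount_add_two_pos μ (walkCount_add_two_mul_pos hm k (by omega)) (by omega)

end

/-- For a composition `μ` of `n`, the set `{ m : C^μ_m > 0 }` is exactly
`{ m : s_μ ≤ m ≤ n, m ≡ n (mod 2) }`; in particular `C^μ_n > 0`, every `m` with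
`C^μ_m > 0` has the parity of `n`, and `C^μ_m > 0` with `m+2 ≤ n` implies
`C^μ_{m+2} > 0`. -/
theorem walkCount_pos_interval {r : ℕ} (μ : Fin r → ℕ) (n : ℕ) (hn : ∑ i, μ i = n) :
    { m : ℕ | 0 < walkCount μ m }
        = { m : ℕ | minDefects μ ≤ m ∧ m ≤ n ∧ m % 2 = n % 2 } ∧
    0 < walkCount μ n ∧
    (∀ m, 0 < walkCount μ m → m % 2 = n % 2) ∧
    (∀ m, 0 < walkCount μ m → m + 2 ≤ n → 0 < walkCount μ (m + 2)) := by
  subst hn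
  have hmod : ∀ m, 0 < walkCount μ m → m % 2 = (∑ i, μ i) % 2 := fun m hm =>
    let ⟨_, ht⟩ := (walkCount_pos_iff μ).1 hm; ht.mod_two_eq
  refine ⟨Set.ext fun m => ⟨fun hm => ?_, fun ⟨hsm, hmn, hmp⟩ => ?_⟩, walkCount_sum_pos μ, hmod,
    fun m hm => walkCount_add_two_pos μ hm⟩
  · obtain ⟨_, ht⟩ := (walkCount_pos_iff μ).1 hm
    exact ⟨Nat.sInf_le hm, ht.le_sum, ht.mod_two_eq⟩
  · have hs := hmod _ (walkCount_minDefects_pos μ)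
    obtain ⟨k, rfl⟩ : ∃ k, m = minDefects μ + 2 * k := ⟨(m - minDefects μ) / 2, by omega⟩
    exact walkCount_add_two_mul_pos μ (walkCount_minDefects_pos μ) k hmn
end
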